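/- If G is a bipartite graph, then for every q ≥ 2 all proper q-colourings of G are Kempe equivalent. -/

import Mathlib

open SimpleGraph

variable {V : Type*}

/-- Topological embedding of a simple graph in a space `S`. -/
def SimpleGraph.EmbedsIn (G : SimpleGraph V) (S : Type*) [TopologicalSpace S] : Prop :=
  ∃ (φ : V → S) (γ : ∀ u v, G.Adj u v → _root_.Path (φ u) (φ v)),
    Function.Injective φ ∧
    (∀ u v (h : G.Adj u v), Function.Injective (γ u v h : unitInterval → S)) ∧
    (∀ u v (h : G.Adj u v), γ v u h.symm = (γ u v h).symm) ∧
    (∀ u v (h : G.Adj u v) (t : unitInterval),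
        (γ u v h) t ∈ Set.range φ → t = 0 ∨ t = 1) ∧
    (∀ u v u' v' (h : G.Adj u v) (h' : G.Adj u' v') (t₁ t₂ : unitInterval),
        s(u, v) ≠ s(u', v') → (γ u v h) t₁ = (γ u' v' h') t₂ →
        (γ u v h) t₁ ∈ Set.range φ)

/-- The 2-sphere. -/
abbrev Sphere2 : Type := Metric.sphere (0 : EuclideanSpace ℝ (Fin 3)) 1

/-- The torus. -/
abbrev Torus2 : Type := AddCircle (1 : ℝ) × AddCircle (1 : ℝ)

/-- `G` is `d`-degenerate: every nonempty (induced) subgraph has a vertex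
of degree at most `d`. -/
def SimpleGraph.IsDegenerate (G : SimpleGraph V) (d : ℕ) : Prop :=
  ∀ s : Set V, s.Nonempty → ∃ v ∈ s, ({u ∈ s | G.Adj v u}).ncard ≤ d

/-- A proper colouring with `q` colours. -/
def SimpleGraph.IsProperColoring (G : SimpleGraph V) {q : ℕ} (c : V → Fin q) : Prop :=
  ∀ ⦃u v⦄, G.Adj u v → c u ≠ c v

/-- The subgraph of `G` induced by the vertices coloured `a` or `b`. -/
def SimpleGraph.kempeGraph (G : SimpleGraph V) {q : ℕ} (c : V → Fin q) (a b : Fin q) :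
    SimpleGraph V :=
  SimpleGraph.fromRel fun u v => G.Adj u v ∧ (c u = a ∨ c u = b) ∧ (c v = a ∨ c v = b)

/-- A Kempe move: swap colours `a` and `b` on the connected component of `v₀`
in the subgraph induced by the vertices coloured `a` or `b`. -/
def SimpleGraph.KempeStep (G : SimpleGraph V) {q : ℕ} (c₁ c₂ : V → Fin q) : Prop :=
  ∃ (a b : Fin q) (v₀ : V),
    (∀ v, (G.kempeGraph c₁ a b).Reachable v₀ v → c₂ v = Equiv.swap a b (c₁ v)) ∧
    (∀ v, ¬ (G.kempeGraph c₁ a b).Reachable v₀ v → c₂ v = c₁ v)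

/-- Kempe equivalence: a finite sequence of Kempe moves. -/
def SimpleGraph.KempeEquiv (G : SimpleGraph V) {q : ℕ} (c₁ c₂ : V → Fin q) : Prop :=
  Relation.ReflTransGen (G.KempeStep) c₁ c₂


/-!
Fix the 2-colouring `d` given by the bipartition, with colours `x ≠ y`. A proper colouring
`c ≠ d` can be moved closer to `d`: pick `v` with `c v ≠ d v` and swap `a = c v`, `b = d v` on the
Kempe component of `v`. Since `d` is a proper 2-colouring, colours along that component
alternate between `c = a, d = b` and `c = b, d ≠ b`, so the swap repairs `v` and spoils no
vertex. Hence every proper colouring is Kempe equivalent to `d`, and Kempe moves are reversible.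
-/

theorem Equiv.swap_apply_eq_or_eq_iff {α : Type*} [DecidableEq α] {a b x : α} :
    (Equiv.swap a b x = a ∨ Equiv.swap a b x = b) ↔ (x = a ∨ x = b) := by
  rw [Equiv.swap_apply_eq_iff, Equiv.swap_apply_eq_iff, Equiv.swap_apply_left,
    Equiv.swap_apply_right, or_comm]

namespace SimpleGraph

variable {q : ℕ} {G : SimpleGraph V} {c d : V → Fin q} {a b : Fin q} {u w v₀ : V}

theorem kempeGraph_adj :
    (G.kempeGraph c a b).Adj u w ↔ G.Adj u w ∧ (c u = a ∨ c u = b) ∧ (c w = a ∨ c w = b) := by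
  simp only [kempeGraph, fromRel_adj]
  constructor
  · rintro ⟨-, h | ⟨huw, hw, hu⟩⟩
    · exact h
    · exact ⟨huw.symm, hu, hw⟩
  · intro h
    exact ⟨h.1.ne, Or.inl h⟩

theorem Reachable.kempeGraph_of_adj (h : (G.kempeGraph c a b).Reachable v₀ u) (huw : G.Adj u w)
    (hu : c u = a ∨ c u = b) (hw : c w = a ∨ c w = b) : (G.kempeGraph c a b).Reachable v₀ w :=
  h.trans (kempeGraph_adj.mpr ⟨huw, hu, hw⟩).reachable

variable (G c a b v₀) in
noncomputable def kempeSwap : V → Fin q := by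
  classical
  exact fun v => if (G.kempeGraph c a b).Reachable v₀ v then Equiv.swap a b (c v) else c v

theorem kempeSwap_of_reachable (h : (G.kempeGraph c a b).Reachable v₀ u) :
    G.kempeSwap c a b v₀ u = Equiv.swap a b (c u) := by
  simp [kempeSwap, h]

theorem kempeSwap_of_not_reachable (h : ¬(G.kempeGraph c a b).Reachable v₀ u) :
    G.kempeSwap c a b v₀ u = c u := by
  simp [kempeSwap, h]

theorem kempeSwap_eq_or_eq_iff :
    (G.kempeSwap c a b v₀ u = a ∨ G.kempeSwap c a b v₀ u = b) ↔ (c u = a ∨ c u = b) := by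
  by_cases h : (G.kempeGraph c a b).Reachable v₀ u
  · rw [kempeSwap_of_reachable h, Equiv.swap_apply_eq_or_eq_iff]
  · rw [kempeSwap_of_not_reachable h]

theorem kempeGraph_kempeSwap : G.kempeGraph (G.kempeSwap c a b v₀) a b = G.kempeGraph c a b := by
  ext u w
  simp only [kempeGraph_adj, kempeSwap_eq_or_eq_iff]

theorem kempeSwap_kempeSwap : G.kempeSwap (G.kempeSwap c a b v₀) a b v₀ = c := by
  funext u
  by_cases h : (G.kempeGraph c a b).Reachable v₀ u
  · rw [kempeSwap_of_reachable (by rwa [kempeGraph_kempeSwap]), kempeSwap_of_reachable h,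
      Equiv.swap_apply_self]
  · rw [kempeSwap_of_not_reachable (by rwa [kempeGraph_kempeSwap]), kempeSwap_of_not_reachable h]

variable {c₁ c₂ : V → Fin q}

theorem kempeStep_iff : G.KempeStep c₁ c₂ ↔ ∃ a b v₀, c₂ = G.kempeSwap c₁ a b v₀ := by
  constructor
  · rintro ⟨a, b, v₀, hin, hout⟩
    refine ⟨a, b, v₀, funext fun u => ?_⟩
    by_cases h : (G.kempeGraph c₁ a b).Reachable v₀ u
    · rw [hin u h, kempeSwap_of_reachable h]
    · rw [hout u h, kempeSwap_of_not_reachable h]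
  · rintro ⟨a, b, v₀, rfl⟩
    exact ⟨a, b, v₀, fun _ => kempeSwap_of_reachable, fun _ => kempeSwap_of_not_reachable⟩

theorem kempeStep_kempeSwap : G.KempeStep c (G.kempeSwap c a b v₀) :=
  kempeStep_iff.mpr ⟨a, b, v₀, rfl⟩

theorem KempeStep.symm (h : G.KempeStep c₁ c₂) : G.KempeStep c₂ c₁ := by
  obtain ⟨a, b, v₀, rfl⟩ := kempeStep_iff.mp h
  exact kempeStep_iff.mpr ⟨a, b, v₀, kempeSwap_kempeSwap.symm⟩

theorem KempeEquiv.symm (h : G.KempeEquiv c₁ c₂) : G.KempeEquiv c₂ c₁ :=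
  Relation.ReflTransGen.mono (fun _ _ => KempeStep.symm) _ _ (Relation.reflTransGen_swap.mpr h)

theorem IsProperColoring.kempeSwap (hc : G.IsProperColoring c) :
    G.IsProperColoring (G.kempeSwap c a b v₀) := by
  have across : ∀ ⦃u w⦄, G.Adj u w → (G.kempeGraph c a b).Reachable v₀ u →
      ¬(G.kempeGraph c a b).Reachable v₀ w → G.kempeSwap c a b v₀ u ≠ G.kempeSwap c a b v₀ w := by
    intro u w huw hu hw heq
    rw [kempeSwap_of_reachable hu, kempeSwap_of_not_reachable hw, Equiv.swap_apply_eq_iff] at heq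
    by_cases hcw : c w = a ∨ c w = b
    · have hcu : c u = a ∨ c u = b := heq ▸ Equiv.swap_apply_eq_or_eq_iff.mpr hcw
      exact hw (hu.kempeGraph_of_adj huw hcu hcw)
    · rw [Equiv.swap_apply_of_ne_of_ne (fun h => hcw (.inl h)) (fun h => hcw (.inr h))] at heq
      exact hc huw heq
  intro u w huw
  by_cases hu : (G.kempeGraph c a b).Reachable v₀ u <;>
    by_cases hw : (G.kempeGraph c a b).Reachable v₀ w
  · rw [kempeSwap_of_reachable hu, kempeSwap_of_reachable hw]
    exact (Equiv.swap a b).injective.ne (hc huw)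
  · exact across huw hu hw
  · exact (across huw.symm hw hu).symm
  · rw [kempeSwap_of_not_reachable hu, kempeSwap_of_not_reachable hw]
    exact hc huw

variable {x y : Fin q}

theorem kempeGraph_reachable_alternates (hc : G.IsProperColoring c) (hd : G.IsProperColoring d)
    (hxy : ∀ u, d u = x ∨ d u = y) (hb : b = x ∨ b = y) (hv₀ : c v₀ = a ∧ d v₀ = b)
    (h : (G.kempeGraph c a b).Reachable v₀ u) :
    (c u = a ∧ d u = b) ∨ (c u = b ∧ d u ≠ b) := by
  rw [reachable_iff_reflTransGen] at h
  induction h with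
  | refl => exact .inl hv₀
  | @tail u w _ huw ih =>
    obtain ⟨huw, -, hw⟩ := kempeGraph_adj.mp huw
    have hcuw := hc huw
    have hduw := hd huw
    rcases ih with ⟨hcu, hdu⟩ | ⟨hcu, hdu⟩
    · exact .inr ⟨hw.resolve_left fun h => hcuw (hcu.trans h.symm), hdu ▸ hduw.symm⟩
    · refine .inl ⟨hw.resolve_right fun h => hcuw (hcu.trans h.symm), ?_⟩
      have := hxy u
      have := hxy w
      grind

theorem disagreement_kempeSwap_ssubset (hc : G.IsProperColoring c) (hd : G.IsProperColoring d)
    (hxy : ∀ u, d u = x ∨ d u = y) (hv₀ : c v₀ ≠ d v₀) :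
    {u | G.kempeSwap c (c v₀) (d v₀) v₀ u ≠ d u} ⊂ {u | c u ≠ d u} := by
  have fixes_v₀ : G.kempeSwap c (c v₀) (d v₀) v₀ v₀ = d v₀ := by
    rw [kempeSwap_of_reachable (Reachable.refl v₀), Equiv.swap_apply_left]
  refine ⟨fun u hu => ?_, fun h => h hv₀ fixes_v₀⟩
  by_cases hr : (G.kempeGraph c (c v₀) (d v₀)).Reachable v₀ u
  · rcases kempeGraph_reachable_alternates hc hd hxy (hxy v₀) ⟨rfl, rfl⟩ hr with
      ⟨hcu, hdu⟩ | ⟨hcu, hdu⟩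
    · rw [Set.mem_ofPred_eq, kempeSwap_of_reachable hr, hcu, Equiv.swap_apply_left, hdu] at hu
      exact absurd rfl hu
    · exact fun h => hdu (h ▸ hcu)
  · rwa [Set.mem_ofPred_eq, kempeSwap_of_not_reachable hr] at hu

theorem kempeEquiv_of_forall_eq_or_eq [Finite V] (hc : G.IsProperColoring c)
    (hd : G.IsProperColoring d) (hxy : ∀ u, d u = x ∨ d u = y) : G.KempeEquiv c d := by
  induction h : {u | c u ≠ d u}.ncard using Nat.strong_induction_on generalizing c with
  | _ n ih =>
  by_cases hcd : c = d
  · exact hcd ▸ .refl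
  obtain ⟨v, hv⟩ := Function.ne_iff.mp hcd
  exact .head kempeStep_kempeSwap (ih _ (h ▸ Set.ncard_lt_ncard
    (disagreement_kempeSwap_ssubset hc hd hxy hv)) hc.kempeSwap rfl)

theorem isProperColoring_ite_mem {s : Set V} [DecidablePred (· ∈ s)]
    (hs : ∀ ⦃u v : V⦄, G.Adj u v → (u ∈ s ↔ v ∉ s)) (hxy : x ≠ y) :
    G.IsProperColoring fun v => if v ∈ s then x else y := by
  intro u v huv
  by_cases hu : u ∈ s
  · simp [hu, (hs huv).mp hu, hxy]
  · have hv : v ∈ s := by simpa [hs huv] using hu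
    simp [hu, hv, hxy.symm]

end SimpleGraph

theorem bipartite_kempeEquiv {V : Type*} [Finite V]
    (G : SimpleGraph V)
    (hbip : ∃ s : Set V, ∀ ⦃u v : V⦄, G.Adj u v → (u ∈ s ↔ v ∉ s)) :
    ∀ q : ℕ, 2 ≤ q →
      ∀ c₁ c₂ : V → Fin q, G.IsProperColoring c₁ → G.IsProperColoring c₂ →
        G.KempeEquiv c₁ c₂ := by
  intro q hq c₁ c₂ h₁ h₂
  classical
  obtain ⟨s, hs⟩ := hbip
  let x : Fin q := ⟨0, by omega⟩
  let y : Fin q := ⟨1, by omega⟩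
  have hd := isProperColoring_ite_mem hs (show x ≠ y by simp [x, y, Fin.ext_iff])
  have hxy (v : V) : (if v ∈ s then x else y) = x ∨ (if v ∈ s then x else y) = y := by
    split_ifs <;> simp
  exact (kempeEquiv_of_forall_eq_or_eq h₁ hd hxy).trans
    (kempeEquiv_of_forall_eq_or_eq h₂ hd hxy).symm
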